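/- arXiv:1206.5299 — 2 statements merged into one kernel-verified Lean document; each statement's English description precedes it below -/
import Mathlib

section
/- Let q be a real number with 0 < q < 1, let α > 0 be real, let h be a positive integer, let x > 0 be real, let a and b be odd positive integers, and let j be an integer with 0 ≤ j ≤ a-1. Then for every complex s, ζ̃_{q^a}^{(α,h)}(s, bx + bj/a) = [a]_{q^α}^{s} · [2]_{q^a} · ∑_{i=0}^{b-1} (-1)^i q^{iah} ∑_{m=0}^∞ (-1)^m q^{mabh} / [ab(m+x) + ai + bj]_{q^α}^{s}, where [a]_{q^α}^{s} = exp(s · log [a]_{q^α}). -/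
/-! The base change `[y]_{q^{aα}} = [ay]_{q^α} / [a]_{q^α}` turns every term of
`ζ̃_{q^a}^{(α,h)}(s, y)` into `[a]_{q^α}^s (-1)^m q^{mah} [a(m+y)]_{q^α}^{-s}`. The resulting series
converges absolutely (geometric decay against the bounded `log [·]_{q^α}`), so it may be split
into the residue classes `n = bm + i` mod `b`; as `b` is odd, `(-1)^{bm+i} = (-1)^m (-1)^i`, and
`a(bm + i + bx + bj/a) = ab(m+x) + ai + bj`. -/

/-- The `q`-number `[x]_q = (1 - q^x)/(1 - q)` (real exponent, via `rpow`). -/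
noncomputable def qnum (q x : ℝ) : ℝ := (1 - q ^ x) / (1 - q)

/-- The `m`-th term of the weighted `(h,q)`-zeta series:
`(-1)^m q^{mh} [m+x]_{q^α}^{-s}` where `t^{-s} = exp(-s · log t)` with the real log. -/
noncomputable def zetaTerm (q α : ℝ) (h : ℕ) (x : ℝ) (s : ℂ) (m : ℕ) : ℂ :=
  (-1 : ℂ) ^ m * (q : ℂ) ^ (m * h) *
    Complex.exp (-s * (Real.log (qnum (q ^ α) ((m : ℝ) + x)) : ℂ))

/-- The weighted `(h,q)`-zeta function
`ζ̃_q^{(α,h)}(s,x) = [2]_q ∑_{m≥0} (-1)^m q^{mh} [m+x]_{q^α}^{-s}`. -/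
noncomputable def hqZeta (q α : ℝ) (h : ℕ) (x : ℝ) (s : ℂ) : ℂ :=
  (qnum q 2 : ℂ) * ∑' m : ℕ, zetaTerm q α h x s m

open Complex

lemma qnum_pos {p y : ℝ} (hp0 : 0 < p) (hp1 : p < 1) (hy : 0 < y) : 0 < qnum p y :=
  div_pos (sub_pos.2 (Real.rpow_lt_one hp0.le hp1 hy)) (sub_pos.2 hp1)

lemma qnum_le_inv_one_sub {p : ℝ} (hp0 : 0 ≤ p) (hp1 : p < 1) (y : ℝ) :
    qnum p y ≤ (1 - p)⁻¹ := by
  rw [qnum, div_eq_mul_inv]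
  exact mul_le_of_le_one_left (inv_nonneg.2 (sub_pos.2 hp1).le)
    (sub_le_self 1 (Real.rpow_nonneg hp0 y))

lemma qnum_monotone {p : ℝ} (hp0 : 0 < p) (hp1 : p < 1) : Monotone (qnum p) := fun _ _ hyz =>
  div_le_div_of_nonneg_right
    (sub_le_sub_left (Real.rpow_le_rpow_of_exponent_ge hp0 hp1.le hyz) 1) (sub_pos.2 hp1).le

lemma qnum_rpow_base {p c : ℝ} (hp0 : 0 < p) (hp1 : p < 1) (hc : 0 < c) (y : ℝ) :
    qnum (p ^ c) y = qnum p (c * y) / qnum p c := by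
  have h1 : 1 - p ≠ 0 := (sub_pos.2 hp1).ne'
  have h2 : 1 - p ^ c ≠ 0 := (sub_pos.2 (Real.rpow_lt_one hp0.le hp1 hc)).ne'
  rw [qnum, qnum, qnum, ← Real.rpow_mul hp0.le]
  field_simp

lemma exists_abs_log_qnum_le {p c : ℝ} (hp0 : 0 < p) (hp1 : p < 1) (hc : 0 < c) :
    ∃ M, ∀ y, c ≤ y → |Real.log (qnum p y)| ≤ M :=
  ⟨_, fun y hy => abs_le_max_abs_abs
    (Real.log_le_log (qnum_pos hp0 hp1 hc) (qnum_monotone hp0 hp1 hy))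
    (Real.log_le_log (qnum_pos hp0 hp1 (hc.trans_le hy)) (qnum_le_inv_one_sub hp0.le hp1 y))⟩

lemma norm_cexp_neg_mul_ofReal_le (s : ℂ) {L M : ℝ} (hL : |L| ≤ M) :
    ‖cexp (-s * L)‖ ≤ Real.exp (|s.re| * M) := by
  rw [norm_exp, Real.exp_le_exp]
  calc (-s * L).re = -(s.re * L) := by simp
    _ ≤ |s.re * L| := neg_le_abs _
    _ ≤ |s.re| * M := by rw [abs_mul]; exact mul_le_mul_of_nonneg_left hL (abs_nonneg _)

lemma summable_zetaTerm {q α x : ℝ} (hq0 : 0 < q) (hq1 : q < 1) (hα : 0 < α) {h : ℕ}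
    (hh : 0 < h) (hx : 0 < x) (s : ℂ) : Summable (zetaTerm q α h x s) := by
  obtain ⟨M, hM⟩ := exists_abs_log_qnum_le (Real.rpow_pos_of_pos hq0 α)
    (Real.rpow_lt_one hq0.le hq1 hα) hx
  have hqh : q ^ h < 1 := pow_lt_one₀ hq0.le hq1 hh.ne'
  refine Summable.of_norm_bounded
    ((summable_geometric_of_lt_one (by positivity) hqh).mul_left (Real.exp (|s.re| * M)))
    fun m => ?_
  calc ‖zetaTerm q α h x s m‖
      = (q ^ h) ^ m * ‖cexp (-s * Real.log (qnum (q ^ α) (m + x)))‖ := by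
        rw [zetaTerm, norm_mul, norm_mul, norm_pow, norm_pow, norm_neg, norm_one, one_pow,
          one_mul, norm_real, Real.norm_of_nonneg hq0.le, ← pow_mul, mul_comm h]
    _ ≤ (q ^ h) ^ m * Real.exp (|s.re| * M) := by
        gcongr
        exact norm_cexp_neg_mul_ofReal_le s (hM _ (le_add_of_nonneg_left m.cast_nonneg))
    _ = _ := mul_comm _ _

lemma tsum_eq_sum_range_tsum_mul_add {R : Type*} [AddCommGroup R] [UniformSpace R]
    [IsUniformAddGroup R] [CompleteSpace R] [T0Space R] {f : ℕ → R} (hf : Summable f)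
    {N : ℕ} (hN : 0 < N) : ∑' n, f n = ∑ i ∈ Finset.range N, ∑' m, f (N * m + i) := by
  obtain ⟨N, rfl⟩ := Nat.exists_eq_add_one_of_ne_zero hN.ne'
  rw [Nat.sumByResidueClasses hf (N + 1), ← Fin.sum_univ_eq_sum_range]
  exact Fintype.sum_congr _ _ fun _ => tsum_congr fun _ => congrArg f (add_comm _ _)

noncomputable def scaledZetaTerm (q α : ℝ) (a h : ℕ) (y : ℝ) (s : ℂ) (m : ℕ) : ℂ :=
  (-1 : ℂ) ^ m * (q : ℂ) ^ (m * (a * h)) *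
    cexp (-s * (Real.log (qnum (q ^ α) (a * (m + y))) : ℂ))

lemma zetaTerm_pow_eq {q α y : ℝ} (hq0 : 0 < q) (hq1 : q < 1) (hα : 0 < α) {a : ℕ}
    (ha : 0 < a) (h : ℕ) (hy : 0 < y) (s : ℂ) (m : ℕ) :
    zetaTerm (q ^ a) α h y s m =
      cexp (s * Real.log (qnum (q ^ α) a)) * scaledZetaTerm q α a h y s m := by
  have hp0 : 0 < q ^ α := Real.rpow_pos_of_pos hq0 α
  have hp1 : q ^ α < 1 := Real.rpow_lt_one hq0.le hq1 hα
  have ha' : (0 : ℝ) < a := Nat.cast_pos.2 ha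
  have hbase : (q ^ a) ^ α = (q ^ α) ^ (a : ℝ) := by
    rw [← Real.rpow_natCast, ← Real.rpow_mul hq0.le, mul_comm, Real.rpow_mul hq0.le]
  rw [zetaTerm, scaledZetaTerm, hbase, qnum_rpow_base hp0 hp1 ha',
    Real.log_div (qnum_pos hp0 hp1 (by positivity)).ne' (qnum_pos hp0 hp1 ha').ne']
  push_cast
  rw [← pow_mul, mul_left_comm a, mul_sub, sub_eq_add_neg, exp_add]
  ring_nf

lemma hqZeta_pow_eq {q α y : ℝ} (hq0 : 0 < q) (hq1 : q < 1) (hα : 0 < α) {a : ℕ}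
    (ha : 0 < a) (h : ℕ) (hy : 0 < y) (s : ℂ) :
    hqZeta (q ^ a) α h y s = cexp (s * Real.log (qnum (q ^ α) a)) * (qnum (q ^ a) 2 : ℂ) *
      ∑' m, scaledZetaTerm q α a h y s m := by
  simp only [hqZeta, zetaTerm_pow_eq hq0 hq1 hα ha h hy s, tsum_mul_left]
  ring

lemma summable_scaledZetaTerm {q α y : ℝ} (hq0 : 0 < q) (hq1 : q < 1) (hα : 0 < α) {a : ℕ}
    (ha : 0 < a) {h : ℕ} (hh : 0 < h) (hy : 0 < y) (s : ℂ) :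
    Summable (scaledZetaTerm q α a h y s) := by
  have hqa : q ^ a < 1 := pow_lt_one₀ hq0.le hq1 ha.ne'
  refine (summable_mul_left_iff (exp_ne_zero (s * Real.log (qnum (q ^ α) a)))).1 ?_
  rw [← funext (zetaTerm_pow_eq hq0 hq1 hα ha h hy s)]
  exact summable_zetaTerm (pow_pos hq0 a) hqa hα hh hy s

lemma scaledZetaTerm_mul_add {q α x : ℝ} {a b : ℕ} (ha : 0 < a) (hbo : Odd b) (h j : ℕ)
    (s : ℂ) (i m : ℕ) :
    scaledZetaTerm q α a h (b * x + b * j / a) s (b * m + i) =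
      (-1 : ℂ) ^ i * (q : ℂ) ^ (i * a * h) *
        ((-1 : ℂ) ^ m * (q : ℂ) ^ (m * a * b * h) *
          cexp (-s * (Real.log (qnum (q ^ α) (a * b * (m + x) + a * i + b * j)) : ℂ))) := by
  have ha' : (a : ℝ) ≠ 0 := Nat.cast_ne_zero.2 ha.ne'
  have harg : (a : ℝ) * ((b * m + i : ℕ) + (b * x + b * j / a)) =
      a * b * (m + x) + a * i + b * j := by
    push_cast
    field_simp
    ring
  rw [scaledZetaTerm, harg, pow_add, pow_mul, hbo.neg_one_pow, ← pow_add]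
  ring_nf

theorem stmt1_general (q α x : ℝ) (hq0 : 0 < q) (hq1 : q < 1) (hα : 0 < α) (h : ℕ) (hh : 0 < h)
    (hx : 0 < x) (a b : ℕ) (ha : 0 < a) (hb : 0 < b) (hbo : Odd b)
    (j : ℕ) (s : ℂ) :
    hqZeta (q ^ a) α h ((b : ℝ) * x + (b : ℝ) * (j : ℝ) / (a : ℝ)) s =
      Complex.exp (s * (Real.log (qnum (q ^ α) (a : ℝ)) : ℂ)) * (qnum (q ^ a) 2 : ℂ) *
        ∑ i ∈ Finset.range b, (-1 : ℂ) ^ i * (q : ℂ) ^ (i * a * h) *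
          ∑' m : ℕ, (-1 : ℂ) ^ m * (q : ℂ) ^ (m * a * b * h) *
            Complex.exp (-s *
              (Real.log (qnum (q ^ α)
                ((a : ℝ) * (b : ℝ) * ((m : ℝ) + x) + (a : ℝ) * (i : ℝ) + (b : ℝ) * (j : ℝ))) : ℂ)) := by
  have hy : 0 < (b : ℝ) * x + b * j / a := by positivity
  rw [hqZeta_pow_eq hq0 hq1 hα ha h hy s,
    tsum_eq_sum_range_tsum_mul_add (summable_scaledZetaTerm hq0 hq1 hα ha hh hy s) hb]
  congr 1
  refine Finset.sum_congr rfl fun i _ => ?_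
  simp only [scaledZetaTerm_mul_add ha hbo h j s i, tsum_mul_left]

theorem stmt1 (q α x : ℝ) (hq0 : 0 < q) (hq1 : q < 1) (hα : 0 < α) (h : ℕ) (hh : 0 < h)
    (hx : 0 < x) (a b : ℕ) (ha : 0 < a) (hb : 0 < b) (hao : Odd a) (hbo : Odd b)
    (j : ℕ) (hj : j < a) (s : ℂ) :
    hqZeta (q ^ a) α h ((b : ℝ) * x + (b : ℝ) * (j : ℝ) / (a : ℝ)) s =
      Complex.exp (s * (Real.log (qnum (q ^ α) (a : ℝ)) : ℂ)) * (qnum (q ^ a) 2 : ℂ) *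
        ∑ i ∈ Finset.range b, (-1 : ℂ) ^ i * (q : ℂ) ^ (i * a * h) *
          ∑' m : ℕ, (-1 : ℂ) ^ m * (q : ℂ) ^ (m * a * b * h) *
            Complex.exp (-s *
              (Real.log (qnum (q ^ α)
                ((a : ℝ) * (b : ℝ) * ((m : ℝ) + x) + (a : ℝ) * (i : ℝ) + (b : ℝ) * (j : ℝ))) : ℂ)) :=
  stmt1_general q α x hq0 hq1 hα h hh hx a b ha hb hbo j s
end

section
/- (Theorem 2.1) Let q be a real number with 0 < q < 1, let α > 0 be real, let h be a positive integer, let x > 0 be real, and let a and b be odd positive integers. Then for every complex s, ([2]_{q^b} / [a]_{q^α}^{s}) · ∑_{i=0}^{a-1} (-1)^i q^{ibh} ζ̃_{q^a}^{(α,h)}(s, bx + bi/a) = ([2]_{q^a} / [b]_{q^α}^{s}) · ∑_{i=0}^{b-1} (-1)^i q^{iah} ζ̃_{q^b}^{(α,h)}(s, ax + ai/b), where [a]_{q^α}^{s} = exp(s · log [a]_{q^α}). -/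
/-!
Since `[a(m + y)]_{q^α} = [a]_{q^α} [m + y]_{q^{aα}}` and `a`, `b` are odd, the `i`-th summand on
the left is `[2]_{q^a} [a]_{q^α}^s ∑_m F(am + bi)` with `F(N) = (-1)^N q^{Nh} [N + abx]_{q^α}^{-s}`.
So each side is `[2]_{q^a} [2]_{q^b}` times the sum of `F(am + bi)` over `(i, m) ∈ [0, a) × ℕ`,
resp. of `F(bm + ai)` over `[0, b) × ℕ`, and writing `m = bn + j` the bijection
`(i, bn + j) ↦ (j, an + i)` matches the two. The factor `q^{Nh}`, `h ≥ 1`, makes the double series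
absolutely convergent, which justifies summing it row by row.
-/

open Filter Topology

lemma qnum_rpow {Q : ℝ} (hQ : 0 ≤ Q) (a y : ℝ) : qnum (Q ^ a) y = qnum Q (a * y) / qnum Q a := by
  unfold qnum
  rw [← Real.rpow_mul hQ]
  rcases eq_or_ne (1 - Q) 0 with h1 | h1
  · obtain rfl : Q = 1 := (sub_eq_zero.mp h1).symm
    simp
  rcases eq_or_ne (1 - Q ^ a) 0 with h2 | h2
  · simp [h2]
  field_simp

lemma qnum_pos_s3 {Q y : ℝ} (hQ0 : 0 < Q) (hQ1 : Q < 1) (hy : 0 < y) : 0 < qnum Q y :=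
  div_pos (sub_pos.mpr (Real.rpow_lt_one hQ0.le hQ1 hy)) (sub_pos.mpr hQ1)

lemma tendsto_qnum_add_atTop {Q : ℝ} (hQ0 : 0 < Q) (hQ1 : Q < 1) (c : ℝ) :
    Tendsto (fun N : ℕ => qnum Q (N + c)) atTop (𝓝 (1 - Q)⁻¹) := by
  have hpow : Tendsto (fun N : ℕ => Q ^ ((N : ℝ) + c)) atTop (𝓝 0) := by
    simpa [Real.rpow_add hQ0, Real.rpow_natCast] using
      (tendsto_pow_atTop_nhds_zero_of_lt_one hQ0.le hQ1).mul_const (Q ^ c)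
  simpa [qnum, div_eq_mul_inv] using (hpow.const_sub 1).mul_const (1 - Q)⁻¹

lemma exists_norm_exp_log_qnum_le {Q : ℝ} (hQ0 : 0 < Q) (hQ1 : Q < 1) (c : ℝ) (s : ℂ) :
    ∃ C, ∀ N : ℕ, ‖Complex.exp (-s * (Real.log (qnum Q (N + c)) : ℂ))‖ ≤ C := by
  have hlim := ((tendsto_qnum_add_atTop hQ0 hQ1 c).log (inv_ne_zero (sub_pos.mpr hQ1).ne'))
  have hlim' := (Complex.continuous_exp.tendsto _).comp
    (((Complex.continuous_ofReal.tendsto _).comp hlim).const_mul (-s))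
  obtain ⟨C, hC⟩ := isBounded_iff_forall_norm_le.mp (Metric.isBounded_range_of_tendsto _ hlim')
  exact ⟨C, fun N => hC _ ⟨N, rfl⟩⟩

lemma zetaTerm_add_nat (q α : ℝ) (h : ℕ) (c : ℝ) (s : ℂ) (N n : ℕ) :
    zetaTerm q α h c s (N + n) = (-1) ^ n * (q : ℂ) ^ (n * h) * zetaTerm q α h (n + c) s N := by
  simp only [zetaTerm, Nat.cast_add, add_assoc]
  ring

lemma zetaTerm_pow_of_odd {q α : ℝ} (hq0 : 0 < q) (hq1 : q < 1) (hα : 0 < α) {a : ℕ}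
    (ha : Odd a) (h : ℕ) {y : ℝ} (hy : 0 < y) (s : ℂ) (m : ℕ) :
    zetaTerm (q ^ a) α h y s m =
      Complex.exp (s * (Real.log (qnum (q ^ α) a) : ℂ)) * zetaTerm q α h (a * y) s (a * m) := by
  have hQ0 : 0 < q ^ α := Real.rpow_pos_of_pos hq0 α
  have hQ1 : q ^ α < 1 := Real.rpow_lt_one hq0.le hq1 hα
  have ha0 : (0 : ℝ) < a := by exact_mod_cast ha.pos
  have hbase : (q ^ a) ^ α = (q ^ α) ^ (a : ℝ) := by
    rw [← Real.rpow_natCast, ← Real.rpow_mul hq0.le, ← Real.rpow_mul hq0.le, mul_comm]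
  have hlog : Real.log (qnum ((q ^ a) ^ α) (m + y)) =
      Real.log (qnum (q ^ α) ((a * m : ℕ) + a * y)) - Real.log (qnum (q ^ α) a) := by
    rw [hbase, qnum_rpow hQ0.le, Real.log_div (qnum_pos_s3 hQ0 hQ1 (by positivity)).ne'
      (qnum_pos_s3 hQ0 hQ1 ha0).ne', Nat.cast_mul, mul_add]
  have hsign : (-1 : ℂ) ^ (a * m) = (-1) ^ m := by rw [pow_mul, ha.neg_one_pow]
  simp only [zetaTerm, hlog, hsign, Complex.ofReal_sub, Complex.ofReal_pow, ← pow_mul]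
  rw [show -s * ((Real.log (qnum (q ^ α) ((a * m : ℕ) + a * y)) : ℂ) -
      Real.log (qnum (q ^ α) a)) = s * Real.log (qnum (q ^ α) a) +
      -s * Real.log (qnum (q ^ α) ((a * m : ℕ) + a * y)) by ring, Complex.exp_add]
  ring

lemma norm_zetaTerm {q : ℝ} (hq : 0 ≤ q) (α : ℝ) (h : ℕ) (c : ℝ) (s : ℂ) (N : ℕ) :
    ‖zetaTerm q α h c s N‖ =
      q ^ (N * h) * ‖Complex.exp (-s * (Real.log (qnum (q ^ α) (N + c)) : ℂ))‖ := by
  simp [zetaTerm, abs_of_nonneg hq]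

lemma summable_zetaTerm_mul_add {q α : ℝ} (hq0 : 0 < q) (hq1 : q < 1) (hα : 0 < α) {h : ℕ}
    (hh : 0 < h) (c : ℝ) (s : ℂ) {a : ℕ} (ha : 0 < a) (b : ℕ) :
    Summable fun p : Fin a × ℕ => zetaTerm q α h c s (a * p.2 + b * p.1) := by
  obtain ⟨C, hC⟩ := exists_norm_exp_log_qnum_le (Real.rpow_pos_of_pos hq0 α)
    (Real.rpow_lt_one hq0.le hq1 hα) c s
  have hC0 : 0 ≤ C := (norm_nonneg _).trans (hC 0)
  refine Summable.of_norm_bounded (Summable.of_finite.mul_of_nonneg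
      ((summable_geometric_of_lt_one hq0.le hq1).mul_left C) (fun _ => zero_le_one)
      (fun m => by positivity)) fun ⟨i, m⟩ => ?_
  have hexp : m ≤ (a * m + b * i) * h :=
    (Nat.le_mul_of_pos_left m ha).trans ((Nat.le_add_right _ _).trans (Nat.le_mul_of_pos_right _ hh))
  calc ‖zetaTerm q α h c s (a * m + b * i)‖ ≤ q ^ m * C := by
        rw [norm_zetaTerm hq0.le]
        exact mul_le_mul (pow_le_pow_of_le_one hq0.le hq1.le hexp) (hC _) (norm_nonneg _)
          (by positivity)
    _ = 1 * (C * q ^ m) := by ring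

def finProdNatSwapEquiv (a b : ℕ) (ha : 0 < a) (hb : 0 < b) : Fin a × ℕ ≃ Fin b × ℕ where
  toFun p := (⟨p.2 % b, Nat.mod_lt _ hb⟩, a * (p.2 / b) + p.1)
  invFun p := (⟨p.2 % a, Nat.mod_lt _ ha⟩, b * (p.2 / a) + p.1)
  left_inv := fun ⟨⟨i, hi⟩, m⟩ => by
    ext
    · simp [Nat.mod_eq_of_lt hi]
    · simp [Nat.mul_add_div ha, Nat.div_eq_of_lt hi, Nat.div_add_mod]
  right_inv := fun ⟨⟨j, hj⟩, n⟩ => by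
    ext
    · simp [Nat.mod_eq_of_lt hj]
    · simp [Nat.mul_add_div hb, Nat.div_eq_of_lt hj, Nat.div_add_mod]

lemma tsum_finProd_mul_add_comm {M : Type*} [AddCommMonoid M] [TopologicalSpace M] (f : ℕ → M)
    {a b : ℕ} (ha : 0 < a) (hb : 0 < b) :
    ∑' p : Fin a × ℕ, f (a * p.2 + b * p.1) = ∑' p : Fin b × ℕ, f (b * p.2 + a * p.1) := by
  rw [← (finProdNatSwapEquiv a b ha hb).tsum_eq]
  refine tsum_congr fun ⟨i, m⟩ => congrArg f ?_
  change a * m + b * i = b * (a * (m / b) + i) + a * (m % b)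
  conv_lhs => rw [← Nat.div_add_mod m b]
  ring

lemma sum_hqZeta_eq_tsum {q α x : ℝ} (hq0 : 0 < q) (hq1 : q < 1) (hα : 0 < α) {h : ℕ}
    (hh : 0 < h) (hx : 0 < x) {a b : ℕ} (ha : Odd a) (hb : Odd b) (s : ℂ) :
    ∑ i ∈ Finset.range a, (-1 : ℂ) ^ i * (q : ℂ) ^ (i * b * h) *
        hqZeta (q ^ a) α h ((b : ℝ) * x + (b : ℝ) * (i : ℝ) / (a : ℝ)) s =
      qnum (q ^ a) 2 * Complex.exp (s * (Real.log (qnum (q ^ α) a) : ℂ)) *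
        ∑' p : Fin a × ℕ, zetaTerm q α h (a * b * x) s (a * p.2 + b * p.1) := by
  have ha0 : (0 : ℝ) < a := by exact_mod_cast ha.pos
  have hb0 : (0 : ℝ) < b := by exact_mod_cast hb.pos
  have hterm (i m : ℕ) : (-1 : ℂ) ^ i * (q : ℂ) ^ (i * b * h) *
      zetaTerm (q ^ a) α h (b * x + b * i / a) s m =
      Complex.exp (s * (Real.log (qnum (q ^ α) a) : ℂ)) *
        zetaTerm q α h (a * b * x) s (a * m + b * i) := by
    have harg : a * (b * x + b * i / a) = (b * i : ℕ) + a * b * x := by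
      push_cast
      field_simp
      ring
    rw [zetaTerm_pow_of_odd hq0 hq1 hα ha h (by positivity), harg, zetaTerm_add_nat,
      pow_mul (-1 : ℂ) b i, hb.neg_one_pow]
    ring
  rw [(summable_zetaTerm_mul_add hq0 hq1 hα hh _ s ha.pos b).tsum_prod, tsum_fintype,
    Fin.sum_univ_eq_sum_range (fun i => ∑' m, zetaTerm q α h (a * b * x) s (a * m + b * i)),
    Finset.mul_sum]
  refine Finset.sum_congr rfl fun i _ => ?_
  calc (-1 : ℂ) ^ i * (q : ℂ) ^ (i * b * h) * hqZeta (q ^ a) α h (b * x + b * i / a) s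
      = qnum (q ^ a) 2 * ∑' m, (-1 : ℂ) ^ i * (q : ℂ) ^ (i * b * h) *
          zetaTerm (q ^ a) α h (b * x + b * i / a) s m := by
        rw [hqZeta, tsum_mul_left]
        ring
    _ = _ := by
        simp only [hterm, tsum_mul_left]
        ring

theorem stmt3_general (q α x : ℝ) (hq0 : 0 < q) (hq1 : q < 1) (hα : 0 < α) (h : ℕ) (hh : 0 < h)
    (hx : 0 < x) (a b : ℕ) (hao : Odd a) (hbo : Odd b) (s : ℂ) :
    ((qnum (q ^ b) 2 : ℂ) / Complex.exp (s * (Real.log (qnum (q ^ α) (a : ℝ)) : ℂ))) *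
        ∑ i ∈ Finset.range a, (-1 : ℂ) ^ i * (q : ℂ) ^ (i * b * h) *
          hqZeta (q ^ a) α h ((b : ℝ) * x + (b : ℝ) * (i : ℝ) / (a : ℝ)) s =
      ((qnum (q ^ a) 2 : ℂ) / Complex.exp (s * (Real.log (qnum (q ^ α) (b : ℝ)) : ℂ))) *
        ∑ i ∈ Finset.range b, (-1 : ℂ) ^ i * (q : ℂ) ^ (i * a * h) *
          hqZeta (q ^ b) α h ((a : ℝ) * x + (a : ℝ) * (i : ℝ) / (b : ℝ)) s := by
  rw [sum_hqZeta_eq_tsum hq0 hq1 hα hh hx hao hbo, sum_hqZeta_eq_tsum hq0 hq1 hα hh hx hbo hao,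
    mul_comm (b : ℝ) a, tsum_finProd_mul_add_comm _ hao.pos hbo.pos]
  field_simp

theorem stmt3 (q α x : ℝ) (hq0 : 0 < q) (hq1 : q < 1) (hα : 0 < α) (h : ℕ) (hh : 0 < h)
    (hx : 0 < x) (a b : ℕ) (ha : 0 < a) (hb : 0 < b) (hao : Odd a) (hbo : Odd b) (s : ℂ) :
    ((qnum (q ^ b) 2 : ℂ) / Complex.exp (s * (Real.log (qnum (q ^ α) (a : ℝ)) : ℂ))) *
        ∑ i ∈ Finset.range a, (-1 : ℂ) ^ i * (q : ℂ) ^ (i * b * h) *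
          hqZeta (q ^ a) α h ((b : ℝ) * x + (b : ℝ) * (i : ℝ) / (a : ℝ)) s =
      ((qnum (q ^ a) 2 : ℂ) / Complex.exp (s * (Real.log (qnum (q ^ α) (b : ℝ)) : ℂ))) *
        ∑ i ∈ Finset.range b, (-1 : ℂ) ^ i * (q : ℂ) ^ (i * a * h) *
          hqZeta (q ^ b) α h ((a : ℝ) * x + (a : ℝ) * (i : ℝ) / (b : ℝ)) s :=
  stmt3_general q α x hq0 hq1 hα h hh hx a b hao hbo s
end
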